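/- Let f : ℝ² → ℝ be a smooth, everywhere positive function of (x, t) satisfying the bilinear KdV equation (4 D_x D_t + D_x⁴) f·f = 0. Set v = 2·(log f)_x and u = v_x = 2·(log f)_{xx}. Then 4 v_t + u_{xx} + 3u² = 0, and consequently u satisfies the KdV equation 4 u_t + u_{xxx} + 6 u u_x = 0. -/

import Mathlib

noncomputable section

/-- Partial derivative in the first variable `x` of a function on `ℝ² = ℝ × ℝ`. -/
def pX (f : ℝ × ℝ → ℝ) : ℝ × ℝ → ℝ :=
  fun p => deriv (fun x => f (x, p.2)) p.1

/-- Partial derivative in the second variable `t`. -/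
def pT (f : ℝ × ℝ → ℝ) : ℝ × ℝ → ℝ :=
  fun p => deriv (fun t => f (p.1, t)) p.2

/-- Hirota bilinear operator `D_x D_t f·f = 2(f_{xt} f − f_x f_t)`. -/
def HDxDt (f : ℝ × ℝ → ℝ) : ℝ × ℝ → ℝ :=
  fun p => 2 * (pX (pT f) p * f p - pX f p * pT f p)

/-- Hirota bilinear operator `D_x⁴ f·f = 2(f f_{xxxx} − 4 f_x f_{xxx} + 3 (f_{xx})²)`. -/
def HDx4 (f : ℝ × ℝ → ℝ) : ℝ × ℝ → ℝ :=
  fun p => 2 * (f p * pX (pX (pX (pX f))) p - 4 * pX f p * pX (pX (pX f)) p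
      + 3 * (pX (pX f) p) ^ 2)

lemma sliceX {G : ℝ × ℝ → ℝ} (hG : Differentiable ℝ G) (x t : ℝ) :
    HasDerivAt (fun y => G (y, t)) (pX G (x, t)) x :=
  ((hG.comp (differentiable_id.prodMk (differentiable_const t))).differentiableAt
    (x := x)).hasDerivAt

lemma sliceT {G : ℝ × ℝ → ℝ} (hG : Differentiable ℝ G) (x t : ℝ) :
    HasDerivAt (fun s => G (x, s)) (pT G (x, t)) t :=
  ((hG.comp ((differentiable_const x).prodMk differentiable_id)).differentiableAt
    (x := t)).hasDerivAt

lemma pX_eq {G : ℝ × ℝ → ℝ} (hG : Differentiable ℝ G) :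
    pX G = fun p => fderiv ℝ G p (1, 0) := by
  funext p
  have hc : HasDerivAt (fun y : ℝ => (y, p.2)) ((1 : ℝ), (0 : ℝ)) p.1 :=
    (hasDerivAt_id p.1).prodMk (hasDerivAt_const p.1 p.2)
  have := ((hG p).hasFDerivAt.comp_hasDerivAt_of_eq _ hc (by simp)).deriv
  simpa [pX, Function.comp_def] using this

lemma pT_eq {G : ℝ × ℝ → ℝ} (hG : Differentiable ℝ G) :
    pT G = fun p => fderiv ℝ G p (0, 1) := by
  funext p
  have hc : HasDerivAt (fun s : ℝ => (p.1, s)) ((0 : ℝ), (1 : ℝ)) p.2 :=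
    (hasDerivAt_const p.2 p.1).prodMk (hasDerivAt_id p.2)
  have := ((hG p).hasFDerivAt.comp_hasDerivAt_of_eq _ hc (by simp)).deriv
  simpa [pT, Function.comp_def] using this

lemma pX_smooth {G : ℝ × ℝ → ℝ} (hG : ContDiff ℝ (⊤ : ℕ∞) G) : ContDiff ℝ (⊤ : ℕ∞) (pX G) := by
  rw [pX_eq (hG.differentiable (by simp))]
  exact (hG.fderiv_right (by simp)).clm_apply contDiff_const

lemma pT_smooth {G : ℝ × ℝ → ℝ} (hG : ContDiff ℝ (⊤ : ℕ∞) G) : ContDiff ℝ (⊤ : ℕ∞) (pT G) := by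
  rw [pT_eq (hG.differentiable (by simp))]
  exact (hG.fderiv_right (by simp)).clm_apply contDiff_const

lemma mixed {G : ℝ × ℝ → ℝ} (hG : ContDiff ℝ (⊤ : ℕ∞) G) : pX (pT G) = pT (pX G) := by
  have hGd := hG.differentiable (by simp)
  have hfd : ContDiff ℝ (⊤ : ℕ∞) (fderiv ℝ G) := hG.fderiv_right (by simp)
  have hsymm : ∀ p : ℝ × ℝ, ∀ v w, fderiv ℝ (fderiv ℝ G) p v w = fderiv ℝ (fderiv ℝ G) p w v := by
    intro p v w
    exact second_derivative_symmetric (fun y => (hGd y).hasFDerivAt)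
      ((hfd.differentiable (by simp) p).hasFDerivAt) v w
  funext p
  rw [pX_eq (pT_smooth hG |>.differentiable (by simp)), pT_eq (pX_smooth hG |>.differentiable (by simp)),
    pT_eq hGd, pX_eq hGd]
  simp only
  rw [fderiv_clm_apply (hfd.differentiable (by simp) p) (differentiableAt_const _),
      fderiv_clm_apply (hfd.differentiable (by simp) p) (differentiableAt_const _)]
  simp [hsymm p]

theorem stmt_6
    (f : ℝ × ℝ → ℝ) (hf : ContDiff ℝ (⊤ : ℕ∞) f) (hfpos : ∀ p, 0 < f p)
    (hbil : ∀ p, 4 * HDxDt f p + HDx4 f p = 0)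
    (v u : ℝ × ℝ → ℝ)
    (hv : v = pX (fun p => 2 * Real.log (f p)))
    (hu : u = pX v) :
    (∀ p, 4 * pT v p + pX (pX u) p + 3 * (u p) ^ 2 = 0) ∧
    (∀ p, 4 * pT u p + pX (pX (pX u)) p + 6 * u p * pX u p = 0) := by
  have hne : ∀ p, f p ≠ 0 := fun p => (hfpos p).ne'
  have hf1 : ContDiff ℝ (⊤ : ℕ∞) (pX f) := pX_smooth hf
  have hf2 : ContDiff ℝ (⊤ : ℕ∞) (pX (pX f)) := pX_smooth hf1
  have hf3 : ContDiff ℝ (⊤ : ℕ∞) (pX (pX (pX f))) := pX_smooth hf2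
  have d0 : Differentiable ℝ f := hf.differentiable (by simp)
  have d1 : Differentiable ℝ (pX f) := hf1.differentiable (by simp)
  have d2 : Differentiable ℝ (pX (pX f)) := hf2.differentiable (by simp)
  have d3 : Differentiable ℝ (pX (pX (pX f))) := hf3.differentiable (by simp)
  have hFs : ContDiff ℝ (⊤ : ℕ∞) (fun p => 2 * Real.log (f p)) := contDiff_const.mul (hf.log hne)
  have hvS : ContDiff ℝ (⊤ : ℕ∞) v := hv ▸ pX_smooth hFs
  have huS : ContDiff ℝ (⊤ : ℕ∞) u := hu ▸ pX_smooth hvS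
  -- V : formula for v
  have V : ∀ p : ℝ × ℝ, v p = 2 * pX f p / f p := by
    rintro ⟨x, t⟩
    have hs := sliceX d0 x t
    have hd : HasDerivAt (fun y => 2 * Real.log (f (y, t)))
        (2 * (pX f (x, t) / f (x, t))) x := (hs.log (hne (x, t))).const_mul 2
    rw [hv]
    show deriv (fun y => 2 * Real.log (f (y, t))) x = _
    rw [hd.deriv]; ring
  -- U : formula for u
  have U : ∀ p : ℝ × ℝ, u p = (2 * pX (pX f) p * f p - 2 * pX f p * pX f p) / f p ^ 2 := by
    rintro ⟨x, t⟩
    have hdiv := ((sliceX d1 x t).const_mul (2:ℝ)).div (sliceX d0 x t) (hne (x, t))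
    have hfun : (fun y => v (y, t)) = fun y => 2 * pX f (y, t) / f (y, t) :=
      funext fun y => V (y, t)
    rw [hu]
    show deriv (fun y => v (y, t)) x = _
    rw [hfun]; erw [hdiv.deriv]
  -- W1 : formula for pX u
  have W1 : ∀ p : ℝ × ℝ, pX u p
      = 2 * (pX (pX (pX f)) p * f p ^ 2 - 3 * f p * pX f p * pX (pX f) p + 2 * pX f p ^ 3)
        / f p ^ 3 := by
    rintro ⟨x, t⟩
    have hnum := (((sliceX d2 x t).const_mul (2:ℝ)).mul (sliceX d0 x t)).sub
      (((sliceX d1 x t).const_mul (2:ℝ)).mul (sliceX d1 x t))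
    have hden := (sliceX d0 x t).pow 2
    have hdiv := hnum.div hden (pow_ne_zero 2 (hne (x, t)))
    have hfun : (fun y => u (y, t))
        = fun y => (2 * pX (pX f) (y, t) * f (y, t) - 2 * pX f (y, t) * pX f (y, t))
            / f (y, t) ^ 2 := funext fun y => U (y, t)
    show deriv (fun y => u (y, t)) x = _
    rw [hfun]; erw [hdiv.deriv]; simp only [Pi.mul_apply, Pi.sub_apply, Pi.add_apply, Pi.pow_apply]
    have h0 := hne (x, t)
    field_simp
    ring
  -- W2 : formula for pX (pX u)
  have W2 : ∀ p : ℝ × ℝ, pX (pX u) p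
      = 2 * (pX (pX (pX (pX f))) p * f p ^ 3 - 4 * f p ^ 2 * pX f p * pX (pX (pX f)) p
          - 3 * f p ^ 2 * pX (pX f) p ^ 2 + 12 * f p * pX f p ^ 2 * pX (pX f) p
          - 6 * pX f p ^ 4) / f p ^ 4 := by
    rintro ⟨x, t⟩
    have hnum := ((((sliceX d3 x t).mul ((sliceX d0 x t).pow 2)).sub
        ((((sliceX d0 x t).mul (sliceX d1 x t)).mul (sliceX d2 x t)).const_mul (3:ℝ))).add
        (((sliceX d1 x t).pow 3).const_mul (2:ℝ))).const_mul (2:ℝ)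
    have hden := (sliceX d0 x t).pow 3
    have hdiv := hnum.div hden (pow_ne_zero 3 (hne (x, t)))
    have hfun : (fun y => pX u (y, t))
        = fun y => 2 * (pX (pX (pX f)) (y, t) * f (y, t) ^ 2
            - 3 * (f (y, t) * pX f (y, t) * pX (pX f) (y, t)) + 2 * pX f (y, t) ^ 3)
            / f (y, t) ^ 3 := by
      funext y
      rw [W1 (y, t)]; ring
    show deriv (fun y => pX u (y, t)) x = _
    rw [hfun]; erw [hdiv.deriv]; simp only [Pi.mul_apply, Pi.sub_apply, Pi.add_apply, Pi.pow_apply]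
    have h0 := hne (x, t)
    field_simp
    ring
  -- TV : formula for pT v
  have TV : ∀ p : ℝ × ℝ, pT v p = (2 * pX (pT f) p * f p - 2 * pX f p * pT f p) / f p ^ 2 := by
    rintro ⟨x, t⟩
    have hdiv := ((sliceT d1 x t).const_mul (2:ℝ)).div (sliceT d0 x t) (hne (x, t))
    have hfun : (fun s => v (x, s)) = fun s => 2 * pX f (x, s) / f (x, s) :=
      funext fun s => V (x, s)
    show deriv (fun s => v (x, s)) t = _
    rw [hfun]; erw [hdiv.deriv]; rw [mixed hf]
  -- first claim
  have claim1 : ∀ p, 4 * pT v p + pX (pX u) p + 3 * (u p) ^ 2 = 0 := by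
    intro p
    have h0 := hne p
    have key : 4 * pT v p + pX (pX u) p + 3 * (u p) ^ 2
        = (4 * HDxDt f p + HDx4 f p) / f p ^ 2 := by
      rw [TV p, W2 p, U p]
      simp only [HDxDt, HDx4]
      field_simp
      ring
    rw [key, hbil p, zero_div]
  refine ⟨claim1, ?_⟩
  -- second claim
  rintro ⟨x, t⟩
  have hA := sliceX ((pT_smooth hvS).differentiable (by simp)) x t
  have hB := sliceX ((pX_smooth (pX_smooth huS)).differentiable (by simp)) x t
  have hC := (sliceX (huS.differentiable (by simp)) x t).pow 2
  have total := ((hA.const_mul (4:ℝ)).add hB).add (hC.const_mul (3:ℝ))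
  have hzero : (fun y => 4 * pT v (y, t) + pX (pX u) (y, t) + 3 * u (y, t) ^ 2)
      = fun _ : ℝ => (0:ℝ) := funext fun y => claim1 (y, t)
  rw [show (((fun y => 4 * pT v (y, t)) + fun y => pX (pX u) (y, t)) + fun y => 3 * ((fun y => u (y, t)) ^ 2) y) = fun _ : ℝ => (0:ℝ) from hzero] at total
  have hD := total.unique (hasDerivAt_const x (0:ℝ))
  have hmix : pX (pT v) = pT u := by
    rw [mixed hvS, ← hu]
  rw [hmix] at hD
  push_cast at hD
  linarith [hD]
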